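/- Assume (A) and let ū, u ∈ 𝒰, x₀ ∈ X. For s ∈ I define the spliced control u ▷_s ū := 1_{[0,s)} u + 1_{[s,T]} ū ∈ 𝒰 and let z^s := x^{u ▷_s ū} be the corresponding trajectory from x₀. Then there exists a constant M₀ ≥ 0, independent of s, such that for all 0 ≤ a < b ≤ T one has ‖z^b_T − z^a_T‖_X ≤ M₀ (b − a). -/

import Mathlib

open MeasureTheory Set Filter
open scoped RealInnerProductSpace

noncomputable section

/-- `φ` is a mild solution on `[s,T]` with initial data `(s, x)` for the semigroup `S`. -/
def IsMildSol {X : Type*} [NormedAddCommGroup X] [NormedSpace ℝ X]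
    (T : ℝ) (S : ℝ → X →L[ℝ] X) (F : ℝ → X → X) (s : ℝ) (x : X) (φ : ℝ → X) : Prop :=
  ContinuousOn φ (Set.Icc s T) ∧
    ∀ t ∈ Set.Icc s T, φ t = S (t - s) x + ∫ τ in s..t, S (t - τ) (F τ (φ τ))

/-!
For splicing times `a < b` the vector fields driving `z^a` and `z^b` agree outside `[a, b)`.
Both are Lipschitz with linear growth, with a constant `L` independent of the splicing time, and
the semigroup is bounded by some `C` on `[0, T]` (Banach–Steinhaus). Grönwall's inequality bounds
every `z^s` by a constant `B` independent of `s`, so in the Duhamel formula for `z^b - z^a` the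
fields differ by at most `2 L (1 + B)` on `[a, b)` and by a Lipschitz term elsewhere; a second
application of Grönwall's inequality gives `‖z^b_t - z^a_t‖ ≤ 2 C L (1 + B) (b - a) e^{C L t}`.
The Duhamel integrands are measurable by Carathéodory's argument.
-/

open scoped Topology

theorem aestronglyMeasurable_comp_of_ae_continuous {α X Y : Type*} [MeasurableSpace α]
    {μ : Measure α} [TopologicalSpace X] [TopologicalSpace Y]
    [TopologicalSpace.PseudoMetrizableSpace Y]
    {h : α → X → Y} (hmeas : ∀ x, AEStronglyMeasurable (fun t => h t x) μ)
    (hcont : ∀ᵐ t ∂μ, Continuous (h t)) {φ : α → X} (hφ : AEStronglyMeasurable φ μ) :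
    AEStronglyMeasurable (fun t => h t (φ t)) μ := by
  obtain ⟨g, hg, hφg⟩ := hφ
  -- `hmeas x` holds off a null set depending on `x`; a simple function uses only finitely many `x`
  have simple (ψ : SimpleFunc α X) : AEStronglyMeasurable (fun t => h t (ψ t)) μ := by
    have hcover : (⋃ c : Set.range ψ, ψ ⁻¹' {c.1}) = univ := by
      ext t; simp
    have : Countable (Set.range ψ) := ψ.finite_range.countable.to_subtype
    rw [← Measure.restrict_univ (μ := μ), ← hcover, aestronglyMeasurable_iUnion_iff]
    rintro ⟨c, -⟩
    refine (hmeas c).restrict.congr ?_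
    filter_upwards [ae_restrict_mem (ψ.measurableSet_preimage {c})] with t ht
    rw [ht]
  have hlim : AEStronglyMeasurable (fun t => h t (g t)) μ := by
    refine aestronglyMeasurable_of_tendsto_ae atTop (fun n => simple (hg.approx n)) ?_
    filter_upwards [hcont] with t ht
    exact (ht.tendsto (g t)).comp (hg.tendsto_approx t)
  exact hlim.congr (hφg.mono fun t ht => congrArg (h t) ht.symm)

theorem integrable_comp_of_ae_lipschitz {α X Y : Type*} [MeasurableSpace α] {μ : Measure α}
    [IsFiniteMeasure μ] [SeminormedAddCommGroup X] [NormedAddCommGroup Y] {F : α → X → Y}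
    {L B : ℝ} {φ : α → X} (hmeas : ∀ y, AEStronglyMeasurable (fun τ => F τ y) μ)
    (hF : ∀ᵐ τ ∂μ, (∀ y, ‖F τ y‖ ≤ L * (1 + ‖y‖)) ∧ ∀ y y', ‖F τ y - F τ y'‖ ≤ L * ‖y - y'‖)
    (hL : 0 ≤ L) (hφ : AEStronglyMeasurable φ μ) (hφB : ∀ᵐ τ ∂μ, ‖φ τ‖ ≤ B) :
    Integrable (fun τ => F τ (φ τ)) μ := by
  have hcont : ∀ᵐ τ ∂μ, Continuous (F τ) := hF.mono fun τ h =>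
    (LipschitzWith.of_dist_le' (K := L) fun y y' => by
      simpa only [dist_eq_norm] using h.2 y y').continuous
  refine .of_bound (aestronglyMeasurable_comp_of_ae_continuous hmeas hcont hφ) (L * (1 + B)) ?_
  filter_upwards [hF, hφB] with τ hτ hτB
  exact (hτ.1 _).trans (by gcongr)

theorem exists_opNorm_le_of_continuousOn {𝕜 α E F : Type*} [NontriviallyNormedField 𝕜]
    [TopologicalSpace α] [NormedAddCommGroup E] [NormedSpace 𝕜 E] [CompleteSpace E]
    [NormedAddCommGroup F] [NormedSpace 𝕜 F] {K : Set α} (hK : IsCompact K)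
    {S : α → E →L[𝕜] F} (hS : ∀ x, ContinuousOn (fun σ => S σ x) K) :
    ∃ C, ∀ σ ∈ K, ‖S σ‖ ≤ C :=
  (banach_steinhaus (g := fun σ : K => S σ) fun x =>
    (hK.exists_bound_of_continuousOn (hS x)).imp fun _ h σ => h σ σ.2).imp
      fun _ hC σ hσ => hC ⟨σ, hσ⟩

theorem add_mul_gronwallBound_zero (A K t : ℝ) :
    A + K * gronwallBound 0 K A t = A * Real.exp (K * t) := by
  rcases eq_or_ne K 0 with rfl | hK
  · simp [gronwallBound_K0]
  · rw [gronwallBound_of_K_ne_0 hK]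
    field_simp
    ring

theorem le_mul_exp_of_le_add_mul_integral {g : ℝ → ℝ} {T A K : ℝ}
    (hg : ContinuousOn g (Icc 0 T)) (hK : 0 ≤ K)
    (h : ∀ t ∈ Icc 0 T, g t ≤ A + K * ∫ τ in 0..t, g τ) :
    ∀ t ∈ Icc 0 T, g t ≤ A * Real.exp (K * t) := by
  intro t ht
  have hT : 0 ≤ T := ht.1.trans ht.2
  have hprim : ContinuousOn (fun t => ∫ τ in 0..t, g τ) (Icc 0 T) := by
    simpa only [uIcc_of_le hT] using intervalIntegral.continuousOn_primitive_interval'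
      (hg.intervalIntegrable_of_Icc hT) left_mem_uIcc
  have hderiv : ∀ x ∈ Ico 0 T,
      HasDerivWithinAt (fun t => ∫ τ in 0..t, g τ) (g x) (Ici x) x := by
    intro x hx
    have hnhds : Icc 0 T ∈ 𝓝[>] x :=
      mem_of_superset (Ioo_mem_nhdsGT hx.2) fun y hy => ⟨hx.1.trans hy.1.le, hy.2.le⟩
    exact intervalIntegral.integral_hasDerivWithinAt_right
      ((hg.mono (Icc_subset_Icc le_rfl hx.2.le)).intervalIntegrable_of_Icc hx.1)
      ((hg.stronglyMeasurableAtFilter_nhdsWithin measurableSet_Icc x).filter_mono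
        (nhdsWithin_le_iff.mpr hnhds))
      ((hg x (Ico_subset_Icc_self hx)).mono_of_mem_nhdsWithin hnhds)
  have hprim_le := le_gronwallBound_of_liminf_deriv_right_le (δ := 0) (K := K) (ε := A) hprim
    (fun x hx _ hr => (hderiv x hx).liminf_right_slope_le hr) (by simp)
    (fun x hx => by linarith [h x (Ico_subset_Icc_self hx)])
  calc g t ≤ A + K * ∫ τ in 0..t, g τ := h t ht
    _ ≤ A + K * gronwallBound 0 K A t := by
      gcongr
      simpa using hprim_le t ht
    _ = A * Real.exp (K * t) := add_mul_gronwallBound_zero A K t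

theorem norm_le_mul_one_add_norm_of_lipschitz {E F : Type*} [SeminormedAddCommGroup E]
    [SeminormedAddCommGroup F] {f : E → F} {M : ℝ} (hf : ∀ x y, ‖f x - f y‖ ≤ M * ‖x - y‖)
    (h0 : ‖f 0‖ ≤ M) (x : E) : ‖f x‖ ≤ M * (1 + ‖x‖) := by
  have := hf x 0
  rw [sub_zero] at this
  linarith [norm_le_insert' (f x) (f 0)]

section ControlAffine

variable {𝕜 E X Y : Type*} [NontriviallyNormedField 𝕜] [NormedAddCommGroup E]
  [NormedSpace 𝕜 E] [NormedAddCommGroup X] [NormedAddCommGroup Y] [NormedSpace 𝕜 Y]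
  {f : X → Y} {G : X → E →L[𝕜] Y} {Mf MG R : ℝ} {w : E}

theorem norm_controlAffine_le (hf : ∀ x y, ‖f x - f y‖ ≤ Mf * ‖x - y‖) (hf0 : ‖f 0‖ ≤ Mf)
    (hG : ∀ x y, ‖G x - G y‖ ≤ MG * ‖x - y‖) (hG0 : ‖G 0‖ ≤ MG) (hw : ‖w‖ ≤ R) (y : X) :
    ‖f y + G y w‖ ≤ (Mf + MG * R) * (1 + ‖y‖) := by
  have hGy := norm_le_mul_one_add_norm_of_lipschitz hG hG0 y
  calc ‖f y + G y w‖ ≤ ‖f y‖ + ‖G y‖ * ‖w‖ :=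
        (norm_add_le _ _).trans (by gcongr; exact (G y).le_opNorm w)
    _ ≤ Mf * (1 + ‖y‖) + MG * (1 + ‖y‖) * R :=
      add_le_add (norm_le_mul_one_add_norm_of_lipschitz hf hf0 y)
        (mul_le_mul hGy hw (norm_nonneg _) ((norm_nonneg _).trans hGy))
    _ = (Mf + MG * R) * (1 + ‖y‖) := by ring

theorem norm_controlAffine_sub_le (hf : ∀ x y, ‖f x - f y‖ ≤ Mf * ‖x - y‖)
    (hG : ∀ x y, ‖G x - G y‖ ≤ MG * ‖x - y‖) (hw : ‖w‖ ≤ R) (y y' : X) :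
    ‖(f y + G y w) - (f y' + G y' w)‖ ≤ (Mf + MG * R) * ‖y - y'‖ := by
  have hGyy' := hG y y'
  calc ‖(f y + G y w) - (f y' + G y' w)‖ = ‖(f y - f y') + (G y - G y') w‖ := by
        rw [sub_apply]; abel_nf
    _ ≤ ‖f y - f y'‖ + ‖G y - G y'‖ * ‖w‖ :=
      (norm_add_le _ _).trans (by gcongr; exact (G y - G y').le_opNorm w)
    _ ≤ Mf * ‖y - y'‖ + MG * ‖y - y'‖ * R :=
      add_le_add (hf y y')
        (mul_le_mul hGyy' hw (norm_nonneg _) ((norm_nonneg _).trans hGyy'))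
    _ = (Mf + MG * R) * ‖y - y'‖ := by ring

end ControlAffine

/-- The spliced control `u ▷_s ū`. -/
def spliceControl {E : Type*} (u ubar : ℝ → E) (s : ℝ) : ℝ → E :=
  fun τ => if τ < s then u τ else ubar τ

section Splice

variable {E : Type*} {u ubar : ℝ → E}

theorem spliceControl_eq_of_notMem_Ico {a b τ : ℝ} (hab : a ≤ b) (hτ : τ ∉ Ico a b) :
    spliceControl u ubar b τ = spliceControl u ubar a τ := by
  rw [mem_Ico, not_and_or, not_le, not_lt] at hτ
  rcases hτ with hτa | hbτ
  · simp [spliceControl, hτa, hτa.trans_le hab]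
  · simp [spliceControl, not_lt.2 hbτ, not_lt.2 (hab.trans hbτ)]

theorem ae_spliceControl_mem {μ : Measure ℝ} {U : Set E} (hu : ∀ᵐ τ ∂μ, u τ ∈ U)
    (hubar : ∀ᵐ τ ∂μ, ubar τ ∈ U) : ∀ᵐ τ ∂μ, ∀ s, spliceControl u ubar s τ ∈ U := by
  filter_upwards [hu, hubar] with τ hτ hτ' s
  unfold spliceControl
  split_ifs <;> assumption

theorem MeasureTheory.AEStronglyMeasurable.spliceControl [TopologicalSpace E] {μ : Measure ℝ}
    (hu : AEStronglyMeasurable u μ) (hubar : AEStronglyMeasurable ubar μ) (s : ℝ) :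
    AEStronglyMeasurable (spliceControl u ubar s) μ :=
  show AEStronglyMeasurable ((Iio s).piecewise u ubar) μ from
    hu.restrict.piecewise measurableSet_Iio hubar.restrict

end Splice

theorem setIntegral_indicator_Ico_const {s : Set ℝ} {a b : ℝ} (hab : a ≤ b) (hs : Ico a b ⊆ s)
    (c : ℝ) : ∫ τ in s, (Ico a b).indicator (fun _ => c) τ = (b - a) * c := by
  rw [integral_indicator_const _ measurableSet_Ico, measureReal_restrict_apply measurableSet_Ico,
    inter_eq_left.2 hs, Real.volume_real_Ico_of_le hab, smul_eq_mul]

section MildSolution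

variable {X : Type*} [NormedAddCommGroup X] [NormedSpace ℝ X] {T C L t : ℝ}
  {S : ℝ → X →L[ℝ] X} {F : ℝ → X → X} {x : X} {φ : ℝ → X}

theorem sub_mem_Icc_of_mem_Ioc {τ : ℝ} (ht : t ≤ T) (hτ : τ ∈ Ioc 0 t) : t - τ ∈ Icc 0 T :=
  ⟨sub_nonneg.2 hτ.2, by linarith [hτ.1]⟩

theorem IsMildSol.apply_eq (hφ : IsMildSol T S F 0 x φ) (ht : t ∈ Icc 0 T) :
    φ t = S t x + ∫ τ in 0..t, S (t - τ) (F τ (φ τ)) := by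
  simpa only [sub_zero] using hφ.2 t ht

theorem aestronglyMeasurable_semigroup_apply
    (hS : ∀ y, ContinuousOn (fun σ => S σ y) (Icc 0 T))
    (ht : t ≤ T) {g : ℝ → X} (hg : AEStronglyMeasurable g (volume.restrict (Icc 0 T))) :
    AEStronglyMeasurable (fun τ => S (t - τ) (g τ)) (volume.restrict (Ioc 0 t)) := by
  refine aestronglyMeasurable_comp_of_ae_continuous (h := fun τ => S (t - τ)) (fun y => ?_)
    (ae_of_all _ fun τ => (S (t - τ)).continuous)
    (hg.mono_set (Ioc_subset_Icc_self.trans (Icc_subset_Icc le_rfl ht)))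
  exact ((hS y).comp (continuousOn_const.sub continuousOn_id)
    fun τ hτ => sub_mem_Icc_of_mem_Ioc ht hτ).aestronglyMeasurable measurableSet_Ioc

theorem intervalIntegrable_semigroup_apply
    (hS : ∀ y, ContinuousOn (fun σ => S σ y) (Icc 0 T))
    (hC : ∀ σ ∈ Icc 0 T, ‖S σ‖ ≤ C) (ht : t ∈ Icc 0 T) {g : ℝ → X}
    (hg : IntegrableOn g (Icc 0 T)) :
    IntervalIntegrable (fun τ => S (t - τ) (g τ)) volume 0 t := by
  rw [intervalIntegrable_iff_integrableOn_Ioc_of_le ht.1]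
  have hsub : Ioc 0 t ⊆ Icc 0 T := Ioc_subset_Icc_self.trans (Icc_subset_Icc le_rfl ht.2)
  refine Integrable.mono' ((hg.mono_set hsub).norm.const_mul C)
    (aestronglyMeasurable_semigroup_apply hS ht.2 hg.aestronglyMeasurable) ?_
  filter_upwards [ae_restrict_mem measurableSet_Ioc] with τ hτ
  exact (S _).le_of_opNorm_le (hC _ (sub_mem_Icc_of_mem_Ioc ht.2 hτ)) _

theorem norm_integral_semigroup_apply_le (hC : ∀ σ ∈ Icc 0 T, ‖S σ‖ ≤ C) (ht : t ∈ Icc 0 T)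
    {g : ℝ → X} {b : ℝ → ℝ} (hb : IntervalIntegrable b volume 0 t)
    (hgb : ∀ᵐ τ ∂volume.restrict (Icc 0 T), ‖g τ‖ ≤ b τ) :
    ‖∫ τ in 0..t, S (t - τ) (g τ)‖ ≤ C * ∫ τ in 0..t, b τ := by
  have hC0 : 0 ≤ C := (norm_nonneg _).trans (hC 0 ⟨le_rfl, ht.1.trans ht.2⟩)
  rw [← intervalIntegral.integral_const_mul]
  refine intervalIntegral.norm_integral_le_of_norm_le ht.1 ?_ (hb.const_mul C)
  filter_upwards [ae_imp_of_ae_restrict hgb] with τ hτ hτt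
  exact ((S _).le_of_opNorm_le (hC _ (sub_mem_Icc_of_mem_Ioc ht.2 hτt)) _).trans
    (mul_le_mul_of_nonneg_left (hτ ⟨hτt.1.le, hτt.2.trans ht.2⟩) hC0)

theorem IsMildSol.norm_le (hφ : IsMildSol T S F 0 x φ) (hC : ∀ σ ∈ Icc 0 T, ‖S σ‖ ≤ C)
    (hL : 0 ≤ L) (hF : ∀ᵐ τ ∂volume.restrict (Icc 0 T), ∀ y, ‖F τ y‖ ≤ L * (1 + ‖y‖))
    (ht : t ∈ Icc 0 T) : ‖φ t‖ ≤ C * (‖x‖ + L * T) * Real.exp (C * L * T) := by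
  have hC0 : 0 ≤ C := (norm_nonneg _).trans (hC 0 ⟨le_rfl, ht.1.trans ht.2⟩)
  have hgronwall :
      ∀ t ∈ Icc 0 T, ‖φ t‖ ≤ C * (‖x‖ + L * T) + C * L * ∫ τ in 0..t, ‖φ τ‖ := by
    intro t ht
    have hint : IntervalIntegrable (fun τ => ‖φ τ‖) volume 0 t :=
      (hφ.1.norm.mono (Icc_subset_Icc le_rfl ht.2)).intervalIntegrable_of_Icc ht.1
    have hduhamel := norm_integral_semigroup_apply_le hC ht
      ((intervalIntegrable_const.add hint).const_mul L) (hF.mono fun τ h => h (φ τ))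
    rw [intervalIntegral.integral_const_mul,
      intervalIntegral.integral_add intervalIntegrable_const hint,
      intervalIntegral.integral_const, smul_eq_mul, mul_one, sub_zero] at hduhamel
    calc ‖φ t‖ ≤ ‖S t x‖ + ‖∫ τ in 0..t, S (t - τ) (F τ (φ τ))‖ := by
          rw [hφ.apply_eq ht]; exact norm_add_le _ _
      _ ≤ C * ‖x‖ + C * (L * (t + ∫ τ in 0..t, ‖φ τ‖)) :=
          add_le_add ((S t).le_of_opNorm_le (hC t ht) x) hduhamel
      _ ≤ C * (‖x‖ + L * T) + C * L * ∫ τ in 0..t, ‖φ τ‖ := by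
          have : C * L * t ≤ C * L * T := by gcongr; exact ht.2
          linarith
  calc ‖φ t‖ ≤ C * (‖x‖ + L * T) * Real.exp (C * L * t) :=
        le_mul_exp_of_le_add_mul_integral hφ.1.norm (by positivity) hgronwall t ht
    _ ≤ C * (‖x‖ + L * T) * Real.exp (C * L * T) := by
        have : 0 ≤ T := ht.1.trans ht.2
        gcongr
        exact ht.2

theorem IsMildSol.intervalIntegrable_integrand (hφ : IsMildSol T S F 0 x φ)
    (hS : ∀ y, ContinuousOn (fun σ => S σ y) (Icc 0 T)) (hC : ∀ σ ∈ Icc 0 T, ‖S σ‖ ≤ C)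
    (hL : 0 ≤ L) (hmeas : ∀ y, AEStronglyMeasurable (fun τ => F τ y) (volume.restrict (Icc 0 T)))
    (hF : ∀ᵐ τ ∂volume.restrict (Icc 0 T),
      (∀ y, ‖F τ y‖ ≤ L * (1 + ‖y‖)) ∧ ∀ y y', ‖F τ y - F τ y'‖ ≤ L * ‖y - y'‖)
    (ht : t ∈ Icc 0 T) :
    IntervalIntegrable (fun τ => S (t - τ) (F τ (φ τ))) volume 0 t :=
  intervalIntegrable_semigroup_apply hS hC ht <| integrable_comp_of_ae_lipschitz hmeas hF hL
    (hφ.1.aestronglyMeasurable measurableSet_Icc) <| ae_restrict_of_forall_mem measurableSet_Icc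
      fun _ hτ => hφ.norm_le hC hL (hF.mono fun _ h => h.1) hτ

theorem IsMildSol.norm_sub_le {F₁ F₂ : ℝ → X → X} {φ₁ φ₂ : ℝ → X} {δ : ℝ → ℝ}
    (h₁ : IsMildSol T S F₁ 0 x φ₁) (h₂ : IsMildSol T S F₂ 0 x φ₂)
    (hC : ∀ σ ∈ Icc 0 T, ‖S σ‖ ≤ C) (hL : 0 ≤ L)
    (hint₁ : ∀ t ∈ Icc 0 T,
      IntervalIntegrable (fun τ => S (t - τ) (F₁ τ (φ₁ τ))) volume 0 t)
    (hint₂ : ∀ t ∈ Icc 0 T,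
      IntervalIntegrable (fun τ => S (t - τ) (F₂ τ (φ₂ τ))) volume 0 t)
    (hLip : ∀ᵐ τ ∂volume.restrict (Icc 0 T), ∀ y y', ‖F₁ τ y - F₁ τ y'‖ ≤ L * ‖y - y'‖)
    (hδ : IntegrableOn δ (Icc 0 T))
    (hF : ∀ᵐ τ ∂volume.restrict (Icc 0 T), ‖F₁ τ (φ₂ τ) - F₂ τ (φ₂ τ)‖ ≤ δ τ)
    (ht : t ∈ Icc 0 T) :
    ‖φ₁ t - φ₂ t‖ ≤ C * (∫ τ in Icc 0 T, δ τ) * Real.exp (C * L * t) := by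
  have hC0 : 0 ≤ C := (norm_nonneg _).trans (hC 0 ⟨le_rfl, ht.1.trans ht.2⟩)
  have hd : ContinuousOn (fun t => ‖φ₁ t - φ₂ t‖) (Icc 0 T) := (h₁.1.sub h₂.1).norm
  refine le_mul_exp_of_le_add_mul_integral hd (by positivity) (fun t ht => ?_) t ht
  have hdiff : φ₁ t - φ₂ t = ∫ τ in 0..t, S (t - τ) (F₁ τ (φ₁ τ) - F₂ τ (φ₂ τ)) := by
    simp_rw [map_sub]
    rw [intervalIntegral.integral_sub (hint₁ t ht) (hint₂ t ht), h₁.apply_eq ht,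
      h₂.apply_eq ht]
    abel
  have hdint : IntervalIntegrable (fun τ => ‖φ₁ τ - φ₂ τ‖) volume 0 t :=
    (hd.mono (Icc_subset_Icc le_rfl ht.2)).intervalIntegrable_of_Icc ht.1
  have hδint : IntervalIntegrable δ volume 0 t :=
    IntegrableOn.intervalIntegrable <|
      hδ.mono_set (by rw [uIcc_of_le ht.1]; exact Icc_subset_Icc le_rfl ht.2)
  have hduhamel := norm_integral_semigroup_apply_le hC ht ((hdint.const_mul L).add hδint)
    (g := fun τ => F₁ τ (φ₁ τ) - F₂ τ (φ₂ τ)) <| by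
      filter_upwards [hLip, hF] with τ hτL hτδ
      exact (norm_sub_le_norm_sub_add_norm_sub _ (F₁ τ (φ₂ τ)) _).trans
        (add_le_add (hτL _ _) hτδ)
  rw [intervalIntegral.integral_add (hdint.const_mul L) hδint,
    intervalIntegral.integral_const_mul, ← hdiff] at hduhamel
  have hδle : ∫ τ in 0..t, δ τ ≤ ∫ τ in Icc 0 T, δ τ := by
    rw [intervalIntegral.integral_of_le ht.1]
    exact setIntegral_mono_set hδ (hF.mono fun τ h => (norm_nonneg _).trans h)
      (Ioc_subset_Icc_self.trans (Icc_subset_Icc le_rfl ht.2)).eventuallyLE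
  calc ‖φ₁ t - φ₂ t‖ ≤ C * (L * (∫ τ in 0..t, ‖φ₁ τ - φ₂ τ‖) + ∫ τ in 0..t, δ τ) := hduhamel
    _ ≤ C * (L * (∫ τ in 0..t, ‖φ₁ τ - φ₂ τ‖) + ∫ τ in Icc 0 T, δ τ) := by gcongr
    _ = C * (∫ τ in Icc 0 T, δ τ) + C * L * ∫ τ in 0..t, ‖φ₁ τ - φ₂ τ‖ := by ring

theorem exists_terminal_lipschitz_of_eq_off_Ico {F : ℝ → ℝ → X → X} {z : ℝ → ℝ → X}
    (hT : 0 ≤ T) (hz : ∀ s ∈ Icc 0 T, IsMildSol T S (F s) 0 x (z s))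
    (hS : ∀ y, ContinuousOn (fun σ => S σ y) (Icc 0 T)) (hC : ∀ σ ∈ Icc 0 T, ‖S σ‖ ≤ C)
    (hL : 0 ≤ L)
    (hmeas : ∀ s y, AEStronglyMeasurable (fun τ => F s τ y) (volume.restrict (Icc 0 T)))
    (hF : ∀ᵐ τ ∂volume.restrict (Icc 0 T), ∀ s,
      (∀ y, ‖F s τ y‖ ≤ L * (1 + ‖y‖)) ∧ ∀ y y', ‖F s τ y - F s τ y'‖ ≤ L * ‖y - y'‖)
    (hFeq : ∀ a b τ, a ≤ b → τ ∉ Ico a b → F b τ = F a τ) :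
    ∃ M₀ : ℝ, 0 ≤ M₀ ∧ ∀ a b : ℝ, 0 ≤ a → a < b → b ≤ T →
      ‖z b T - z a T‖ ≤ M₀ * (b - a) := by
  have hC0 : 0 ≤ C := (norm_nonneg _).trans (hC 0 ⟨le_rfl, hT⟩)
  have hint s (hs : s ∈ Icc 0 T) t (ht : t ∈ Icc 0 T) :=
    (hz s hs).intervalIntegrable_integrand hS hC hL (hmeas s) (hF.mono fun _ h => h s) ht
  set B := C * (‖x‖ + L * T) * Real.exp (C * L * T)
  refine ⟨C * (2 * (L * (1 + B))) * Real.exp (C * L * T), by positivity,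
    fun a b ha hab hbT => ?_⟩
  have haI : a ∈ Icc 0 T := ⟨ha, hab.le.trans hbT⟩
  have hbI : b ∈ Icc 0 T := ⟨ha.trans hab.le, hbT⟩
  have hδ : ∀ᵐ τ ∂volume.restrict (Icc 0 T), ‖F b τ (z a τ) - F a τ (z a τ)‖ ≤
      (Ico a b).indicator (fun _ => 2 * (L * (1 + B))) τ := by
    filter_upwards [hF, ae_restrict_mem measurableSet_Icc] with τ hτ hτT
    by_cases hτab : τ ∈ Ico a b
    · have hzB := (hz a haI).norm_le hC hL (hF.mono fun _ h => (h a).1) hτT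
      have hbound s : ‖F s τ (z a τ)‖ ≤ L * (1 + B) := ((hτ s).1 _).trans (by gcongr)
      rw [indicator_of_mem hτab]
      linarith [norm_sub_le (F b τ (z a τ)) (F a τ (z a τ)), hbound a, hbound b]
    · simp [indicator_of_notMem hτab, hFeq a b τ hab.le hτab]
  calc ‖z b T - z a T‖
      ≤ C * (∫ τ in Icc 0 T, (Ico a b).indicator (fun _ => 2 * (L * (1 + B))) τ)
        * Real.exp (C * L * T) :=
      (hz b hbI).norm_sub_le (hz a haI) hC hL (hint b hbI) (hint a haI)
        (hF.mono fun _ h => (h b).2)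
        ((integrableOn_const measure_Icc_lt_top.ne).indicator measurableSet_Ico) hδ ⟨hT, le_rfl⟩
    _ = C * (2 * (L * (1 + B))) * Real.exp (C * L * T) * (b - a) := by
      rw [setIntegral_indicator_Ico_const hab.le
        (Ico_subset_Icc_self.trans (Icc_subset_Icc ha hbT))]
      ring

end MildSolution

theorem spliced_trajectory_terminal_lipschitz_general
    {X : Type*} [NormedAddCommGroup X] [NormedSpace ℝ X] [CompleteSpace X]
    {m : ℕ} {T : ℝ} (hT : 0 < T)
    (S : ℝ → X →L[ℝ] X)
    (hScont : ∀ x : X, ContinuousOn (fun σ => S σ x) (Set.Ici (0 : ℝ)))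
    (U : Set (EuclideanSpace ℝ (Fin m))) (hUcpt : IsCompact U)
    (f : ℝ → X → X) (G : ℝ → X → EuclideanSpace ℝ (Fin m) →L[ℝ] X)
    {Mf MG : ℝ} (hMf : 0 ≤ Mf) (hMG : 0 ≤ MG)
    (hfmeas : ∀ x : X,
      AEStronglyMeasurable (fun t => f t x) (volume.restrict (Set.Icc (0:ℝ) T)))
    (hGmeas : ∀ x : X,
      AEStronglyMeasurable (fun t => G t x) (volume.restrict (Set.Icc (0:ℝ) T)))
    (hA : ∀ᵐ t ∂(volume.restrict (Set.Icc (0:ℝ) T)),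
        (∀ x y : X, ‖f t x - f t y‖ ≤ Mf * ‖x - y‖) ∧
        (∀ x y : X, ‖G t x - G t y‖ ≤ MG * ‖x - y‖) ∧
        ‖f t 0‖ ≤ Mf ∧ ‖G t 0‖ ≤ MG)
    (ubar u : ℝ → EuclideanSpace ℝ (Fin m))
    (hubar_meas : AEStronglyMeasurable ubar (volume.restrict (Set.Icc (0:ℝ) T)))
    (hubar_mem : ∀ᵐ t ∂(volume.restrict (Set.Icc (0:ℝ) T)), ubar t ∈ U)
    (hu_meas : AEStronglyMeasurable u (volume.restrict (Set.Icc (0:ℝ) T)))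
    (hu_mem : ∀ᵐ t ∂(volume.restrict (Set.Icc (0:ℝ) T)), u t ∈ U)
    (x₀ : X) (z : ℝ → ℝ → X)
    (hz : ∀ s ∈ Set.Icc (0:ℝ) T,
      IsMildSol T S
        (fun τ y => f τ y + G τ y (if τ < s then u τ else ubar τ)) 0 x₀ (z s)) :
    ∃ M₀ : ℝ, 0 ≤ M₀ ∧ ∀ a b : ℝ, 0 ≤ a → a < b → b ≤ T →
      ‖z b T - z a T‖ ≤ M₀ * (b - a) := by
  have hScont' (y : X) : ContinuousOn (fun σ => S σ y) (Icc 0 T) :=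
    (hScont y).mono Icc_subset_Ici_self
  obtain ⟨R, hR0, hR⟩ := hUcpt.isBounded.exists_pos_norm_le
  obtain ⟨C, hC⟩ := exists_opNorm_le_of_continuousOn isCompact_Icc hScont'
  refine exists_terminal_lipschitz_of_eq_off_Ico (L := Mf + MG * R)
    (F := fun s τ y => f τ y + G τ y (spliceControl u ubar s τ)) hT.le hz hScont' hC
    (by positivity) (fun s y => ?_) ?_ fun a b τ hab hτ => ?_
  · exact (hfmeas y).add <| (ContinuousLinearMap.id ℝ _).aestronglyMeasurable_comp₂ (hGmeas y)
      (hu_meas.spliceControl hubar_meas s)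
  · filter_upwards [hA, ae_spliceControl_mem hu_mem hubar_mem] with τ ⟨hf, hG, hf0, hG0⟩ hv s
    exact ⟨norm_controlAffine_le hf hf0 hG hG0 (hR _ (hv s)),
      norm_controlAffine_sub_le hf hG (hR _ (hv s))⟩
  · simp only [spliceControl_eq_of_notMem_Ico hab hτ]

/-- for the spliced controls `u ▷_s ū = 1_{[0,s)} u + 1_{[s,T]} ū` and the
corresponding trajectories `z^s` from `x₀`, the terminal states are Lipschitz in the
splicing time: `‖z^b_T − z^a_T‖ ≤ M₀ (b − a)` with `M₀` independent of `a, b`. -/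
theorem spliced_trajectory_terminal_lipschitz
    {X : Type*} [NormedAddCommGroup X] [NormedSpace ℝ X] [CompleteSpace X]
    {m : ℕ} {T : ℝ} (hT : 0 < T)
    (S : ℝ → X →L[ℝ] X)
    (hS0 : S 0 = ContinuousLinearMap.id ℝ X)
    (hSadd : ∀ a b : ℝ, 0 ≤ a → 0 ≤ b → S (a + b) = (S a).comp (S b))
    (hScont : ∀ x : X, ContinuousOn (fun σ => S σ x) (Set.Ici (0 : ℝ)))
    (U : Set (EuclideanSpace ℝ (Fin m))) (hUcpt : IsCompact U) (hUcvx : Convex ℝ U)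
    (f : ℝ → X → X) (G : ℝ → X → EuclideanSpace ℝ (Fin m) →L[ℝ] X)
    {Mf MG : ℝ} (hMf : 0 ≤ Mf) (hMG : 0 ≤ MG)
    (hfmeas : ∀ x : X,
      AEStronglyMeasurable (fun t => f t x) (volume.restrict (Set.Icc (0:ℝ) T)))
    (hGmeas : ∀ x : X,
      AEStronglyMeasurable (fun t => G t x) (volume.restrict (Set.Icc (0:ℝ) T)))
    (hA : ∀ᵐ t ∂(volume.restrict (Set.Icc (0:ℝ) T)),
        (∀ x y : X, ‖f t x - f t y‖ ≤ Mf * ‖x - y‖) ∧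
        (∀ x y : X, ‖G t x - G t y‖ ≤ MG * ‖x - y‖) ∧
        ‖f t 0‖ ≤ Mf ∧ ‖G t 0‖ ≤ MG)
    (ubar u : ℝ → EuclideanSpace ℝ (Fin m))
    (hubar_meas : AEStronglyMeasurable ubar (volume.restrict (Set.Icc (0:ℝ) T)))
    (hubar_mem : ∀ᵐ t ∂(volume.restrict (Set.Icc (0:ℝ) T)), ubar t ∈ U)
    (hu_meas : AEStronglyMeasurable u (volume.restrict (Set.Icc (0:ℝ) T)))
    (hu_mem : ∀ᵐ t ∂(volume.restrict (Set.Icc (0:ℝ) T)), u t ∈ U)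
    (x₀ : X) (z : ℝ → ℝ → X)
    (hz : ∀ s ∈ Set.Icc (0:ℝ) T,
      IsMildSol T S
        (fun τ y => f τ y + G τ y (if τ < s then u τ else ubar τ)) 0 x₀ (z s)) :
    ∃ M₀ : ℝ, 0 ≤ M₀ ∧ ∀ a b : ℝ, 0 ≤ a → a < b → b ≤ T →
      ‖z b T - z a T‖ ≤ M₀ * (b - a) :=
  spliced_trajectory_terminal_lipschitz_general hT S hScont U hUcpt f G hMf hMG hfmeas hGmeas hA
    ubar u hubar_meas hubar_mem hu_meas hu_mem x₀ z hz
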